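/- Let J be an ideal of S = K[x_1,...,x_n] with a fixed monomial order, and let (E_i)_{i∈Λ} be a family of monomial ideals of S such that in(J + E_i) = in(J) + E_i for all i ∈ Λ. Set E = ⋂_{i∈Λ} E_i. Then in(J + E) = in(J) + E and ⋂_{i∈Λ}(J + E_i) = J + E. -/

import Mathlib

/-!
Intersections commute with sums of monomial ideals, because a monomial lies in a sum of
monomial ideals exactly when it lies in one of the summands. Hence
`in(⋂ (J + Eᵢ)) ⊆ ⋂ in(J + Eᵢ) = ⋂ (in J + Eᵢ) = in J + E ⊆ in(J + E)`,
and monotonicity of `in` gives the first claim. For the second, `J + E ⊆ ⋂ (J + Eᵢ)` are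
nested ideals whose initial ideals agree, and such ideals coincide: dividing an element of
the larger one by the nonzero elements of the smaller one leaves a remainder none of whose
monomials is a leading monomial of the smaller ideal, so the remainder is zero.
-/

open MvPolynomial

variable {K : Type*} [Field K] {n : ℕ}

/-- The leading monomial (exponent vector) of a polynomial with respect to a monomial
order `m`: the maximum of the support; by convention `lm m 0 = 0`. -/
noncomputable def lm (m : MonomialOrder (Fin n)) (f : MvPolynomial (Fin n) K) :
    Fin n →₀ ℕ :=
  m.toSyn.symm (f.support.sup fun d => m.toSyn d)

/-- The initial ideal of `I`: the ideal generated by the leading monomials of the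
nonzero elements of `I`. -/
noncomputable def initialIdeal (m : MonomialOrder (Fin n))
    (I : Ideal (MvPolynomial (Fin n) K)) : Ideal (MvPolynomial (Fin n) K) :=
  Ideal.span {p | ∃ f ∈ I, f ≠ 0 ∧ p = monomial (lm m f) (1 : K)}

/-- `G` is a Gröbner basis of `I`: a finite set of nonzero polynomials generating `I`
whose leading monomials generate the initial ideal of `I`. -/
def IsGroebnerBasis (m : MonomialOrder (Fin n)) (I : Ideal (MvPolynomial (Fin n) K))
    (G : Set (MvPolynomial (Fin n) K)) : Prop :=
  G.Finite ∧ (0 : MvPolynomial (Fin n) K) ∉ G ∧ Ideal.span G = I ∧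
    Ideal.span ((fun g => monomial (lm m g) (1 : K)) '' G) = initialIdeal m I

/-- The S-polynomial `S(f,g)` with respect to the monomial order `m`. -/
noncomputable def sPoly (m : MonomialOrder (Fin n)) (f g : MvPolynomial (Fin n) K) :
    MvPolynomial (Fin n) K :=
  monomial (lm m f ⊔ lm m g - lm m f) (f.coeff (lm m f))⁻¹ * f -
    monomial (lm m f ⊔ lm m g - lm m g) (g.coeff (lm m g))⁻¹ * g

/-- An ideal is a monomial ideal if it is generated by monomials. -/
def IsMonomialIdeal (I : Ideal (MvPolynomial (Fin n) K)) : Prop :=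
  ∃ M : Set (Fin n →₀ ℕ), I = Ideal.span ((fun μ => (monomial μ (1 : K))) '' M)

open MonomialOrder

lemma monomial_mem_span_monomial_image_iff {S : Set (Fin n →₀ ℕ)} {μ : Fin n →₀ ℕ} :
    monomial μ (1 : K) ∈ Ideal.span ((fun ν => monomial ν (1 : K)) '' S) ↔
      ∃ ν ∈ S, ν ≤ μ := by
  classical
  rw [mem_ideal_span_monomial_image, support_monomial, if_neg one_ne_zero]
  simp

namespace IsMonomialIdeal

variable {A B E : Ideal (MvPolynomial (Fin n) K)}

lemma mem_iff (hE : IsMonomialIdeal E) {f : MvPolynomial (Fin n) K} :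
    f ∈ E ↔ ∀ μ ∈ f.support, monomial μ (1 : K) ∈ E := by
  obtain ⟨M, rfl⟩ := hE
  rw [mem_ideal_span_monomial_image]
  simp only [monomial_mem_span_monomial_image_iff]

lemma add (hA : IsMonomialIdeal A) (hB : IsMonomialIdeal B) : IsMonomialIdeal (A + B) := by
  obtain ⟨MA, rfl⟩ := hA
  obtain ⟨MB, rfl⟩ := hB
  exact ⟨MA ∪ MB, by rw [Set.image_union, Ideal.span_union, Submodule.add_eq_sup]⟩

lemma monomial_mem_add_iff (hA : IsMonomialIdeal A) (hB : IsMonomialIdeal B)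
    {μ : Fin n →₀ ℕ} :
    monomial μ (1 : K) ∈ A + B ↔ monomial μ (1 : K) ∈ A ∨ monomial μ (1 : K) ∈ B := by
  obtain ⟨MA, rfl⟩ := hA
  obtain ⟨MB, rfl⟩ := hB
  rw [Submodule.add_eq_sup, ← Ideal.span_union, ← Set.image_union]
  simp only [monomial_mem_span_monomial_image_iff, Set.mem_union, or_and_right, exists_or]

lemma iInf {ι : Type*} {E : ι → Ideal (MvPolynomial (Fin n) K)}
    (hE : ∀ i, IsMonomialIdeal (E i)) : IsMonomialIdeal (⨅ i, E i) := by
  refine ⟨{μ | monomial μ (1 : K) ∈ ⨅ i, E i}, le_antisymm (fun f hf => ?_) ?_⟩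
  · rw [mem_ideal_span_monomial_image]
    refine fun μ hμ => ⟨μ, Submodule.mem_iInf _ |>.mpr fun i => ?_, le_rfl⟩
    exact (hE i).mem_iff.mp (Submodule.mem_iInf _ |>.mp hf i) μ hμ
  · rw [Ideal.span_le]
    rintro _ ⟨μ, hμ, rfl⟩
    exact hμ

lemma iInf_add {ι : Type*} {E : ι → Ideal (MvPolynomial (Fin n) K)}
    (hA : IsMonomialIdeal A) (hE : ∀ i, IsMonomialIdeal (E i)) :
    ⨅ i, (A + E i) = A + ⨅ i, E i := by
  refine le_antisymm (fun f hf => ?_) (le_iInf fun i => add_le_add_right (iInf_le E i) A)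
  refine (hA.add (iInf hE)).mem_iff.mpr fun μ hμ => ?_
  have hμi (i : ι) : monomial μ (1 : K) ∈ A + E i :=
    (hA.add (hE i)).mem_iff.mp (Submodule.mem_iInf _ |>.mp hf i) μ hμ
  rw [hA.monomial_mem_add_iff (iInf hE), Submodule.mem_iInf, or_iff_not_imp_left]
  exact fun hμA i => ((hA.monomial_mem_add_iff (hE i)).mp (hμi i)).resolve_left hμA

end IsMonomialIdeal

section InitialIdeal

variable (m : MonomialOrder (Fin n))

lemma lm_eq_degree (f : MvPolynomial (Fin n) K) : lm m f = m.degree f := rfl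

lemma initialIdeal_eq_span_monomial_image (I : Ideal (MvPolynomial (Fin n) K)) :
    initialIdeal m I =
      Ideal.span ((fun μ => monomial μ (1 : K)) '' (m.degree '' {f | f ∈ I ∧ f ≠ 0})) := by
  rw [initialIdeal, Set.image_image]
  congr 1
  ext p
  simp [lm_eq_degree, eq_comm, and_assoc]

lemma isMonomialIdeal_initialIdeal (I : Ideal (MvPolynomial (Fin n) K)) :
    IsMonomialIdeal (initialIdeal m I) :=
  ⟨_, initialIdeal_eq_span_monomial_image m I⟩

lemma monomial_mem_initialIdeal_iff {I : Ideal (MvPolynomial (Fin n) K)} {μ : Fin n →₀ ℕ} :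
    monomial μ (1 : K) ∈ initialIdeal m I ↔ ∃ f ∈ I, f ≠ 0 ∧ m.degree f ≤ μ := by
  simp [initialIdeal_eq_span_monomial_image, monomial_mem_span_monomial_image_iff, and_assoc]

variable {m}

lemma initialIdeal_mono {I J : Ideal (MvPolynomial (Fin n) K)} (hIJ : I ≤ J) :
    initialIdeal m I ≤ initialIdeal m J :=
  Ideal.span_mono fun _ ⟨f, hf, hf0, hp⟩ => ⟨f, hIJ hf, hf0, hp⟩

lemma initialIdeal_iInf_le {ι : Type*} (I : ι → Ideal (MvPolynomial (Fin n) K)) :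
    initialIdeal m (⨅ i, I i) ≤ ⨅ i, initialIdeal m (I i) :=
  le_iInf fun i => initialIdeal_mono (iInf_le I i)

lemma IsMonomialIdeal.le_initialIdeal {E : Ideal (MvPolynomial (Fin n) K)}
    (hE : IsMonomialIdeal E) : E ≤ initialIdeal m E := by
  obtain ⟨M, rfl⟩ := hE
  refine Ideal.span_le.mpr ?_
  rintro _ ⟨μ, hμ, rfl⟩
  refine Ideal.subset_span ⟨monomial μ 1, Ideal.subset_span ⟨μ, hμ, rfl⟩, ?_, ?_⟩
  · exact monomial_eq_zero.not.mpr one_ne_zero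
  · classical
    rw [lm_eq_degree, degree_monomial, if_neg one_ne_zero]

lemma le_of_initialIdeal_le {I J : Ideal (MvPolynomial (Fin n) K)} (hJI : J ≤ I)
    (hin : initialIdeal m I ≤ initialIdeal m J) : I ≤ J := by
  intro f hf
  let B := {b | b ∈ J ∧ b ≠ 0}
  obtain ⟨g, r, hfr, -, hr⟩ := m.div_set (B := B)
    (fun b hb => isUnit_iff_ne_zero.mpr (leadingCoeff_ne_zero_iff.mpr hb.2)) f
  have hq : Finsupp.linearCombination _ (fun b : B => (b : MvPolynomial (Fin n) K)) g ∈ J :=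
    Ideal.span_le.mpr (fun b hb => hb.1)
      ((Finsupp.mem_span_iff_linearCombination _ _ _).mpr ⟨g, rfl⟩)
  suffices r = 0 by rw [hfr, this, add_zero]; exact hq
  by_contra hr0
  have hrI : r ∈ I := by
    rw [eq_sub_of_add_eq' hfr.symm]
    exact I.sub_mem hf (hJI hq)
  obtain ⟨b, hbJ, hb0, hbr⟩ := (monomial_mem_initialIdeal_iff m).mp
    (hin ((monomial_mem_initialIdeal_iff m).mpr ⟨r, hrI, hr0, le_rfl⟩))
  exact hr _ (m.degree_mem_support hr0) b ⟨hbJ, hb0⟩ hbr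

end InitialIdeal

/-- For a family of monomial ideals `E i` with `in(J + E i) = in(J) + E i`, setting
`E = ⋂ E i` one has `in(J + E) = in(J) + E` and `⋂ (J + E i) = J + E`. -/
theorem stmt12 (m : MonomialOrder (Fin n)) (J : Ideal (MvPolynomial (Fin n) K))
    {ι : Type*} (E : ι → Ideal (MvPolynomial (Fin n) K))
    (hmono : ∀ i, IsMonomialIdeal (E i))
    (h : ∀ i, initialIdeal m (J + E i) = initialIdeal m J + E i) :
    initialIdeal m (J + ⨅ i, E i) = initialIdeal m J + ⨅ i, E i ∧
      (⨅ i, (J + E i)) = J + ⨅ i, E i := by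
  have hJE : J + ⨅ i, E i ≤ ⨅ i, (J + E i) :=
    le_iInf fun i => add_le_add_right (iInf_le E i) J
  have hupper : initialIdeal m (⨅ i, (J + E i)) ≤ initialIdeal m J + ⨅ i, E i := by
    rw [← (isMonomialIdeal_initialIdeal m J).iInf_add hmono, ← iInf_congr h]
    exact initialIdeal_iInf_le _
  have hlower : initialIdeal m J + ⨅ i, E i ≤ initialIdeal m (J + ⨅ i, E i) :=
    add_le_iff.mpr ⟨initialIdeal_mono le_sup_left,
      (IsMonomialIdeal.iInf hmono).le_initialIdeal.trans (initialIdeal_mono le_sup_right)⟩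
  refine ⟨le_antisymm ((initialIdeal_mono hJE).trans hupper) hlower, le_antisymm ?_ hJE⟩
  exact le_of_initialIdeal_le hJE (hupper.trans hlower)
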